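/- Under the approximate reward function R̂ = (0, 0, 1, 0) and discount factor 0 < γ < 1, any policy π_E with π_E(s0) = b is optimal: for every policy π, V(R̂, π) ≤ V(R̂, π_E), and the inequality is strict whenever π(s0) ≠ b. Hence the expert policy is optimal under R̂ as well as under the true reward. -/

import Mathlib

/-- Deterministic transition function: from `s0 = 0`, action `a : Fin 3`
leads to state `a.succ` (i.e. `a ↦ s1`, `b ↦ s2`, `c ↦ s3`); every other
state is fixed under every action. -/
def P (s : Fin 4) (a : Fin 3) : Fin 4 := if s = 0 then a.succ else s

/-- Trajectory of policy `π` started at `s0 = 0`. -/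
def traj (π : Fin 4 → Fin 3) (t : ℕ) : Fin 4 := (fun s => P s (π s))^[t] 0

/-- Discounted value of policy `π` from `s0 = 0` under reward `R` and discount `γ`. -/
noncomputable def V (R : Fin 4 → ℝ) (γ : ℝ) (π : Fin 4 → Fin 3) : ℝ :=
  ∑' t : ℕ, γ ^ t * R (traj π t)

lemma traj_succ (π : Fin 4 → Fin 3) (t : ℕ) : traj π (t + 1) = (π 0).succ := by
  induction t with
  | zero => simp [traj, P]
  | succ n ih =>
    have : traj π (n + 1 + 1) = P (traj π (n + 1)) (π (traj π (n + 1))) := by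
      rw [traj, traj, Function.iterate_succ_apply']
    rw [this, ih]
    simp [P, Fin.succ_ne_zero]

lemma V_eq (γ : ℝ) (hγ0 : 0 < γ) (hγ1 : γ < 1) (π : Fin 4 → Fin 3) :
    V ![0, 0, 1, 0] γ π =
      (![0, 0, 1, 0] : Fin 4 → ℝ) ((π 0).succ) * γ * (1 - γ)⁻¹ := by
  set d : ℝ := (![0, 0, 1, 0] : Fin 4 → ℝ) ((π 0).succ) with hd
  have hgeo : HasSum (fun t : ℕ => γ ^ t) (1 - γ)⁻¹ :=
    hasSum_geometric_of_lt_one hγ0.le hγ1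
  have h1 : HasSum (fun t : ℕ =>
      γ ^ (t + 1) * (![0, 0, 1, 0] : Fin 4 → ℝ) (traj π (t + 1))) (d * γ * (1 - γ)⁻¹) := by
    have := hgeo.mul_left (d * γ)
    refine this.congr_fun fun t => ?_
    rw [traj_succ, pow_succ]
    ring
  have h2 : HasSum (fun t : ℕ =>
      γ ^ t * (![0, 0, 1, 0] : Fin 4 → ℝ) (traj π t)) (d * γ * (1 - γ)⁻¹) := by
    have := (hasSum_nat_add_iff (f := fun t : ℕ =>
      γ ^ t * (![0, 0, 1, 0] : Fin 4 → ℝ) (traj π t)) 1).mp h1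
    simpa [traj] using this
  rw [V, h2.tsum_eq, hd]

theorem expert_optimal_approx_reward (γ : ℝ) (hγ0 : 0 < γ) (hγ1 : γ < 1)
    (πE : Fin 4 → Fin 3) (hE : πE 0 = 1) :
    (∀ π : Fin 4 → Fin 3, V ![0, 0, 1, 0] γ π ≤ V ![0, 0, 1, 0] γ πE) ∧
    (∀ π : Fin 4 → Fin 3, π 0 ≠ 1 →
      V ![0, 0, 1, 0] γ π < V ![0, 0, 1, 0] γ πE) := by
  have hpos : 0 < γ * (1 - γ)⁻¹ := mul_pos hγ0 (inv_pos.mpr (by linarith))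
  have hVE : V ![0, 0, 1, 0] γ πE = γ * (1 - γ)⁻¹ := by
    rw [V_eq γ hγ0 hγ1, hE]; norm_num [show (![0, 0, 1, 0] : Fin 4 → ℝ) 2 = 1 from rfl]
  have key : ∀ π : Fin 4 → Fin 3, π 0 ≠ 1 → V ![0, 0, 1, 0] γ π = 0 := by
    intro π hπ
    rw [V_eq γ hγ0 hγ1]
    rcases h : π 0 with ⟨v, hv⟩
    rw [h] at hπ
    interval_cases v <;> simp [Fin.succ] at hπ ⊢
  constructor
  · intro π
    by_cases h : π 0 = 1
    · rw [V_eq γ hγ0 hγ1, h, hVE]; norm_num [show (![0, 0, 1, 0] : Fin 4 → ℝ) 2 = 1 from rfl]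
    · rw [key π h, hVE]; linarith
  · intro π h
    rw [key π h, hVE]; linarith
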